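/- arXiv:2105.09145 — 5 statements merged into one kernel-verified Lean document; each statement's English description precedes it below -/
import Mathlib

section
/- Let D be a discrete probability distribution with probabilities p_1 ≥ p_2 ≥ ... ≥ p_n sorted in decreasing order, and let H(D) = Σ_i p_i log(1/p_i) be its Shannon entropy (base e). For all γ ∈ (0,1) and z ∈ ℕ, if z ≥ γ · e^{H(D)/(1-γ)}, then Σ_{i=1}^{z} p_i ≥ γ. -/
/-!
If the first `z` probabilities carry mass `S < γ`, then every later probability is at most
`S / z < γ / z`, so each tail term contributes `p log (1/p) ≥ p log (z/γ)`. Hence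
`H(D) ≥ (1 - S) log (z/γ) > (1 - γ) log (z/γ)`, whereas the hypothesis on `z` says exactly
`(1 - γ) log (z/γ) ≥ H(D)`.
-/

open Real Finset

lemma mul_log_inv_le_negMulLog {x q : ℝ} (hx : 0 ≤ x) (hxq : x ≤ q) :
    x * log q⁻¹ ≤ negMulLog x := by
  rcases hx.eq_or_lt with rfl | hx
  · simp
  rw [negMulLog, log_inv, mul_neg, neg_mul, neg_le_neg_iff]
  exact mul_le_mul_of_nonneg_left (log_le_log hx hxq) hx.le

lemma sum_mul_log_inv_le_sum_negMulLog {ι : Type*} (s : Finset ι) {p : ι → ℝ} {q : ℝ}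
    (hnn : ∀ i ∈ s, 0 ≤ p i) (hle : ∀ i ∈ s, p i ≤ q) :
    (∑ i ∈ s, p i) * log q⁻¹ ≤ ∑ i ∈ s, negMulLog (p i) := by
  rw [sum_mul]
  exact sum_le_sum fun i hi => mul_log_inv_le_negMulLog (hnn i hi) (hle i hi)

lemma Antitone.mul_le_sum_prefix {n : ℕ} {p : Fin n → ℝ} (hp : Antitone p) {z : ℕ} {i : Fin n}
    (hi : z ≤ i) : z * p i ≤ ∑ j ∈ univ.filter (fun j : Fin n => (j : ℕ) < z), p j := by
  have hcard : (univ.filter fun j : Fin n => (j : ℕ) < z).card = z := by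
    rw [show univ.filter (fun j : Fin n => (j : ℕ) < z) = Iio ⟨z, hi.trans_lt i.isLt⟩ by
      ext j; simp [Fin.lt_def], Fin.card_Iio]
  calc (z : ℝ) * p i = ∑ _j ∈ univ.filter (fun j : Fin n => (j : ℕ) < z), p i := by
        simp [hcard]
    _ ≤ _ := sum_le_sum fun j hj => hp <| Fin.le_def.2 <| by
        simp only [mem_filter, mem_univ, true_and] at hj; omega

lemma Antitone.one_sub_sum_prefix_mul_log_le_entropy {n : ℕ} {p : Fin n → ℝ} (hsort : Antitone p)
    (hnn : ∀ i, 0 ≤ p i) (hsum : ∑ i, p i = 1) {z : ℕ} (hz : 0 < z) {q : ℝ}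
    (hq : ∑ i ∈ univ.filter (fun i : Fin n => (i : ℕ) < z), p i ≤ z * q) :
    (1 - ∑ i ∈ univ.filter (fun i : Fin n => (i : ℕ) < z), p i) * log q⁻¹ ≤
      ∑ i, negMulLog (p i) := by
  set S := ∑ i ∈ univ.filter (fun i : Fin n => (i : ℕ) < z), p i
  set tail := univ.filter (fun i : Fin n => ¬ (i : ℕ) < z)
  have htail_sum : ∑ i ∈ tail, p i = 1 - S := by
    rw [← hsum, ← sum_filter_add_sum_filter_not univ (fun i : Fin n => (i : ℕ) < z)]
    ring
  have htail_le : ∀ i ∈ tail, p i ≤ q := fun i hi =>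
    le_of_mul_le_mul_left ((hsort.mul_le_sum_prefix (by simpa [tail] using hi)).trans hq)
      (by exact_mod_cast hz)
  have hle_one : ∀ i, p i ≤ 1 := fun i => hsum ▸ single_le_sum (fun j _ => hnn j) (mem_univ i)
  calc (1 - S) * log q⁻¹ = (∑ i ∈ tail, p i) * log q⁻¹ := by rw [htail_sum]
    _ ≤ ∑ i ∈ tail, negMulLog (p i) :=
        sum_mul_log_inv_le_sum_negMulLog tail (fun i _ => hnn i) htail_le
    _ ≤ ∑ i, negMulLog (p i) := sum_le_sum_of_subset_of_nonneg (subset_univ _)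
        fun i _ _ => negMulLog_nonneg (hnn i) (hle_one i)

/-- Entropy-concentration lemma: if `z ≥ γ·e^{H(D)/(1-γ)}`, then the `z` largest
probabilities of a sorted distribution carry mass at least `γ`. -/
theorem entropy_concentration (n : ℕ) (p : Fin n → ℝ) (hsort : Antitone p)
    (hnn : ∀ i, 0 ≤ p i) (hsum : ∑ i, p i = 1)
    (γ : ℝ) (hγ : γ ∈ Set.Ioo (0 : ℝ) 1) (z : ℕ)
    (hz : γ * Real.exp ((∑ i, Real.negMulLog (p i)) / (1 - γ)) ≤ (z : ℝ)) :
    γ ≤ ∑ i ∈ Finset.univ.filter (fun i : Fin n => (i : ℕ) < z), p i := by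
  obtain ⟨hγ0, hγ1⟩ := hγ
  set H := ∑ i, negMulLog (p i)
  by_contra! hS
  have hz0 : (0 : ℝ) < z := (mul_pos hγ0 (exp_pos _)).trans_le hz
  have hlog_pos : 0 < log (z / γ) :=
    log_pos <| (one_lt_div hγ0).2 <| hγ1.trans_le <| Nat.one_le_cast.2 (by exact_mod_cast hz0)
  have hupper : H ≤ (1 - γ) * log (z / γ) := by
    have hexp : exp (H / (1 - γ)) ≤ z / γ := by rw [le_div_iff₀ hγ0]; linarith
    rw [← div_le_iff₀' (sub_pos.2 hγ1)]
    exact (le_log_iff_exp_le (by positivity)).2 hexp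
  have hlower := hsort.one_sub_sum_prefix_mul_log_le_entropy hnn hsum (z := z)
    (by exact_mod_cast hz0) (q := γ / z) (by rw [mul_div_cancel₀ _ hz0.ne']; exact hS.le)
  rw [inv_div] at hlower
  nlinarith [mul_pos (sub_pos.2 hS) hlog_pos]
end

section
/- In a finite rooted tree where each node h is assigned a probability π(h) satisfying π(root) = 1 and for every internal node h, the sum of π over the children of h equals π(h), and where the depth of every node is at most L, the number of nodes h with π(h) ≥ p is at most (L+1)/p for any p > 0. -/
/-!
The mass of each depth level is at most `1`: the level of depth `n + 1` is partitioned into the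
children of the nodes of depth `n`, and the children of a node carry at most its own mass. Summing
over the `L + 1` levels gives `∑ π ≤ L + 1`, and Markov's inequality bounds the number of nodes
with `π ≥ p` by `(L + 1) / p`.
-/

open Finset
open scoped Classical

/-- The children of node `h` in the tree `T` (histories are lists of actions). -/
noncomputable def children (T : Finset (List ℕ)) (h : List ℕ) : Finset (List ℕ) :=
  T.filter (fun h' => ∃ a : ℕ, h' = h ++ [a])

/-- A finite rooted tree `T` (a prefix-closed finite set of histories containing
the root `[]`) together with reachability probabilities `π`: `π(root) = 1` and
for every internal node the children's probabilities sum to the parent's. -/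
structure TreeProb (T : Finset (List ℕ)) (π : List ℕ → ℝ) : Prop where
  root_mem : [] ∈ T
  prefix_closed : ∀ h ∈ T, ∀ h' : List ℕ, h' <+: h → h' ∈ T
  nonneg : ∀ h ∈ T, 0 ≤ π h
  le_one : ∀ h ∈ T, π h ≤ 1
  root_one : π [] = 1
  internal_sum : ∀ h ∈ T, (children T h).Nonempty → π h = ∑ h' ∈ children T h, π h'

def level (T : Finset (List ℕ)) (ℓ : ℕ) : Finset (List ℕ) :=
  T.filter (·.length = ℓ)

theorem Finset.card_filter_le_sum_div {ι : Type*} (s : Finset ι) {f : ι → ℝ}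
    (hf : ∀ i ∈ s, 0 ≤ f i) {p : ℝ} (hp : 0 < p) :
    ((s.filter (fun i => p ≤ f i)).card : ℝ) ≤ (∑ i ∈ s, f i) / p := by
  rw [le_div_iff₀ hp]
  calc ((s.filter (fun i => p ≤ f i)).card : ℝ) * p
      = (s.filter (fun i => p ≤ f i)).card • p := (nsmul_eq_mul _ _).symm
    _ ≤ ∑ i ∈ s.filter (fun i => p ≤ f i), f i :=
        card_nsmul_le_sum _ _ _ fun i hi => (mem_filter.mp hi).2
    _ ≤ ∑ i ∈ s, f i := sum_le_sum_of_subset_of_nonneg (filter_subset _ _) fun i hi _ => hf i hi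

theorem filter_level_succ_dropLast_eq_children (T : Finset (List ℕ)) {h : List ℕ} {n : ℕ}
    (hh : h.length = n) :
    {h' ∈ level T (n + 1) | h'.dropLast = h} = children T h := by
  ext h'
  simp only [level, children, mem_filter]
  constructor
  · rintro ⟨⟨hmem, hlen⟩, rfl⟩
    have hne : h' ≠ [] := List.ne_nil_of_length_eq_add_one hlen
    exact ⟨hmem, h'.getLast hne, (List.dropLast_append_getLast hne).symm⟩
  · rintro ⟨hmem, a, rfl⟩
    exact ⟨⟨hmem, by simp [hh]⟩, List.dropLast_concat⟩

namespace TreeProb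

variable {T : Finset (List ℕ)} {π : List ℕ → ℝ}

theorem sum_children_le (hT : TreeProb T π) {h : List ℕ} (hh : h ∈ T) :
    ∑ h' ∈ children T h, π h' ≤ π h := by
  rcases (children T h).eq_empty_or_nonempty with hempty | hne
  · simpa [hempty] using hT.nonneg h hh
  · exact (hT.internal_sum h hh hne).ge

theorem level_zero (hT : TreeProb T π) : level T 0 = {[]} := by
  ext h
  simp only [level, mem_filter, mem_singleton, List.length_eq_zero_iff]
  exact ⟨And.right, fun hh => ⟨hh ▸ hT.root_mem, hh⟩⟩

theorem sum_level_le_one (hT : TreeProb T π) (ℓ : ℕ) : ∑ h ∈ level T ℓ, π h ≤ 1 := by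
  induction ℓ with
  | zero => simp [hT.level_zero, hT.root_one]
  | succ n ih =>
    have hparent : ∀ h' ∈ level T (n + 1), h'.dropLast ∈ level T n := by
      intro h' hh'
      simp only [level, mem_filter] at hh' ⊢
      exact ⟨hT.prefix_closed h' hh'.1 _ h'.dropLast_prefix, by simp [hh'.2]⟩
    calc ∑ h' ∈ level T (n + 1), π h'
        = ∑ h ∈ level T n, ∑ h' ∈ children T h, π h' := by
          rw [← sum_fiberwise_of_maps_to hparent]
          refine sum_congr rfl fun h hh => ?_
          rw [filter_level_succ_dropLast_eq_children T (mem_filter.mp hh).2]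
      _ ≤ ∑ h ∈ level T n, π h :=
          sum_le_sum fun h hh => hT.sum_children_le (mem_filter.mp hh).1
      _ ≤ 1 := ih

theorem sum_le_of_length_le (hT : TreeProb T π) {L : ℕ} (hdepth : ∀ h ∈ T, h.length ≤ L) :
    ∑ h ∈ T, π h ≤ L + 1 := by
  have hlen : ∀ h ∈ T, h.length ∈ range (L + 1) := fun h hh =>
    mem_range.mpr (Nat.lt_succ_of_le (hdepth h hh))
  calc ∑ h ∈ T, π h = ∑ ℓ ∈ range (L + 1), ∑ h ∈ level T ℓ, π h :=
        (sum_fiberwise_of_maps_to hlen π).symm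
    _ ≤ ∑ _ℓ ∈ range (L + 1), (1 : ℝ) := sum_le_sum fun ℓ _ => hT.sum_level_le_one ℓ
    _ = L + 1 := by simp

end TreeProb

/-- Counting lemma: in a tree of depth at most `L`, at most `(L+1)/p` nodes have
reachability probability at least `p`. -/
theorem count_high_prob_nodes (T : Finset (List ℕ)) (π : List ℕ → ℝ)
    (hT : TreeProb T π) (L : ℕ) (hdepth : ∀ h ∈ T, h.length ≤ L)
    (p : ℝ) (hp : 0 < p) :
    ((T.filter (fun h => p ≤ π h)).card : ℝ) ≤ (L + 1) / p := by
  calc ((T.filter (fun h => p ≤ π h)).card : ℝ)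
      ≤ (∑ h ∈ T, π h) / p := T.card_filter_le_sum_div hT.nonneg hp
    _ ≤ (L + 1) / p := by gcongr; exact hT.sum_le_of_length_le hdepth
end

section
/- Suppose for all ε ∈ (0,1) and some fixed v', λ, L > 0 with λL < e^{-5} the inequality v ≥ (1-ε)v' − (1-ε)·L·λ·e^{H/ε} holds, where v' > v + 0.01 and v' ≤ 1. Then H ≥ (v' − v − 0.01)·(log(1/(λL)) − 5). -/
/-! Take `ε = v' - v - 0.01` itself. Because `v' ≤ 1` and `e⁻⁵ < 0.01`, this `ε` satisfies
`v ≤ (1 - ε) (v' - e⁻⁵)`; comparing with the hypothesis at `ε` gives `λ L e^{H/ε} ≥ e⁻⁵`,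
and taking logarithms gives `H / ε ≥ log (1 / (λ L)) - 5`. -/

open Real

lemma exp_neg_five_lt : exp (-5) < 0.01 := by
  have h5 : exp 5 = exp 1 ^ 5 := by rw [exp_one_pow]; norm_num
  rw [exp_neg, inv_lt_comm₀ (exp_pos 5) (by norm_num), h5]
  nlinarith [pow_le_pow_left₀ (by norm_num) exp_one_gt_d9.le 5]

lemma le_of_mul_sub_le_mul_sub {t v v' x y : ℝ} (ht : 0 < t) (hx : t * (v' - x) ≤ v)
    (hy : v ≤ t * (v' - y)) : y ≤ x := by
  have := (mul_le_mul_iff_right₀ ht).1 (hx.trans hy)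
  linarith

lemma log_div_le_of_le_mul_exp {a b x : ℝ} (ha : 0 < a) (hb : 0 < b) (h : a ≤ b * exp x) :
    log (a / b) ≤ x :=
  (log_le_iff_le_exp (div_pos ha hb)).2 ((div_le_iff₀' hb).2 h)

lemma log_exp_div (c : ℝ) {b : ℝ} (hb : 0 < b) : log (exp c / b) = log (1 / b) + c := by
  rw [log_div (exp_pos c).ne' hb.ne', log_exp, one_div, log_inv]
  ring

theorem entropy_bound_arith_general (v v' lam L H : ℝ) (hv : v ∈ Set.Icc (0 : ℝ) 1)
    (hlam : 0 < lam) (hL : 0 < L)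
    (hv' : v + 0.01 < v') (hv'1 : v' ≤ 1)
    (hineq : ∀ ε ∈ Set.Ioo (0 : ℝ) 1,
      (1 - ε) * v' - (1 - ε) * L * lam * Real.exp (H / ε) ≤ v) :
    (v' - v - 0.01) * (Real.log (1 / (lam * L)) - 5) ≤ H := by
  set ε := v' - v - 0.01 with hε_def
  have hε : ε ∈ Set.Ioo (0 : ℝ) 1 := ⟨by linarith, by linarith [hv.1]⟩
  have hchoice : v ≤ (1 - ε) * (v' - exp (-5)) := by
    have hslack : 0 ≤ 1 - v' + exp (-5) := by linarith [exp_pos (-5)]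
    nlinarith [exp_neg_five_lt, mul_nonneg hε.1.le hslack]
  have hfamily : (1 - ε) * (v' - lam * L * exp (H / ε)) ≤ v := by
    linarith [hineq ε hε]
  have hexp : exp (-5) ≤ lam * L * exp (H / ε) :=
    le_of_mul_sub_le_mul_sub (by linarith [hε.2]) hfamily hchoice
  have hlog := log_div_le_of_le_mul_exp (exp_pos _) (mul_pos hlam hL) hexp
  rw [log_exp_div _ (mul_pos hlam hL), le_div_iff₀ hε.1] at hlog
  linarith

/-- Arithmetic core of Theorem 2: if `v ≥ (1-ε)v' - (1-ε)Lλe^{H/ε}` holds for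
all `ε ∈ (0,1)`, with `λL < e^{-5}` and `v' > v + 0.01`, then
`H ≥ (v' - v - 0.01)(log(1/(λL)) - 5)`. -/
theorem entropy_bound_arith (v v' lam L H : ℝ) (hv : v ∈ Set.Icc (0 : ℝ) 1)
    (hlam : 0 < lam) (hL : 0 < L) (hsmall : lam * L < Real.exp (-5))
    (hv' : v + 0.01 < v') (hv'1 : v' ≤ 1) (hH : 0 ≤ H)
    (hineq : ∀ ε ∈ Set.Ioo (0 : ℝ) 1,
      (1 - ε) * v' - (1 - ε) * L * lam * Real.exp (H / ε) ≤ v) :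
    (v' - v - 0.01) * (Real.log (1 / (lam * L)) - 5) ≤ H :=
  entropy_bound_arith_general v v' lam L H hv hlam hL hv' hv'1 hineq
end

section
/- Consider a finite rooted tree where each node h has a weight w(h) ∈ [0,1] (an estimated value times reach probability) and a cost λ > 0, and define recursively bestvalue(h) = w(h) if h is a leaf, and bestvalue(h) = max( Σ_{h' child of h} bestvalue(h') − λ, w(h) ) otherwise. Then bestvalue(root) = max over all prefix-closed subtrees T containing the root (possibly empty, interpreted as bestvalue = w(root)) of [ Σ_{h ∈ boundary(T)} w(h) − λ·|internal(T)| ], where internal(T) are the nodes of T at which the 'expand' choice is made and boundary(T) are the nodes where expansion stops. -/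
/-!
Generalise from the root to the subtree below an arbitrary node `r` and recurse on the size of
that subtree. A stopping subtree at `r` either stops at `r`, with value `w r`, or expands `r`; then
it is the disjoint union of `{r}` and stopping subtrees at the children of `r`, its boundary is the
disjoint union of theirs, and so its value is the sum of theirs minus `λ`. Conversely, any choice
of stopping subtrees at the children glues to one that expands `r`. Hence the optimal value at `r`
obeys the recursion defining `bestvalue`.
-/

open Finset
open scoped Classical

/-- `I` is a valid set of expanded ("internal") nodes of a stopping subtree:
every expanded node is a non-leaf of `T`, and all strict ancestors of an
expanded node are expanded (so it is actually reached). -/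
def ExpandSet (T I : Finset (List ℕ)) : Prop :=
  I ⊆ T ∧ (∀ h ∈ I, (children T h).Nonempty) ∧
    ∀ h ∈ I, ∀ h' : List ℕ, h' <+: h → h' ≠ h → h' ∈ I

/-- The boundary of a stopping subtree with expanded set `I`: nodes reached
(all strict ancestors expanded) but not expanded themselves. -/
noncomputable def boundary (T I : Finset (List ℕ)) : Finset (List ℕ) :=
  T.filter (fun h => h ∉ I ∧ ∀ h' : List ℕ, h' <+: h → h' ≠ h → h' ∈ I)

/-- Objective of the stopping subtree with expanded set `I`: collected weights
at the boundary minus `λ` per expanded node. -/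
noncomputable def objVal (T I : Finset (List ℕ)) (w : List ℕ → ℝ) (lam : ℝ) : ℝ :=
  (∑ h ∈ boundary T I, w h) - lam * I.card

theorem List.IsPrefix.exists_append_singleton_prefix {α : Type*} {l₁ l₂ : List α}
    (h : l₁ <+: l₂) (hne : l₁ ≠ l₂) : ∃ a, l₁ ++ [a] <+: l₂ := by
  obtain ⟨t, rfl⟩ := h
  cases t with
  | nil => simp at hne
  | cons a t => exact ⟨a, t, by simp⟩

theorem List.not_append_singleton_prefix {α : Type*} (l : List α) (a : α) :
    ¬ l ++ [a] <+: l := fun h => by simpa using h.length_le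

theorem List.IsPrefix.eq_of_append_singleton {α : Type*} {l l' : List α} {a b : α}
    (ha : l ++ [a] <+: l') (hb : l ++ [b] <+: l') : l ++ [a] = l ++ [b] := by
  rcases List.prefix_or_prefix_of_prefix ha hb with h | h
  · exact h.eq_of_length (by simp)
  · exact (h.eq_of_length (by simp)).symm

theorem List.IsPrefix.eq_or_append_singleton_prefix {α : Type*} {l₁ l₂ l : List α} {a : α}
    (h₁ : l₁ <+: l) (h₂ : l <+: l₂) (ha : l₁ ++ [a] <+: l₂) : l = l₁ ∨ l₁ ++ [a] <+: l := by
  rcases List.prefix_or_prefix_of_prefix h₂ ha with h | h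
  · rcases List.prefix_concat_iff.1 h with rfl | h
    · exact Or.inr (List.prefix_refl _)
    · exact Or.inl (h.eq_of_length_le h₁.length_le)
  · exact Or.inr h

section StoppingSubtree

variable {T : Finset (List ℕ)} {r c g : List ℕ} {I : Finset (List ℕ)}

theorem mem_children : c ∈ children T r ↔ c ∈ T ∧ ∃ a, c = r ++ [a] :=
  mem_filter

theorem prefix_of_mem_children (hc : c ∈ children T r) : r <+: c := by
  obtain ⟨-, a, rfl⟩ := mem_children.1 hc
  exact List.prefix_append r [a]

theorem eq_of_mem_children_of_prefix {c' : List ℕ} (hc : c ∈ children T r)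
    (hc' : c' ∈ children T r) (hg : c <+: g) (hg' : c' <+: g) : c = c' := by
  obtain ⟨-, a, rfl⟩ := mem_children.1 hc
  obtain ⟨-, b, rfl⟩ := mem_children.1 hc'
  exact hg.eq_of_append_singleton hg'

theorem card_filter_prefix_lt (hr : r ∈ T) (hc : c ∈ children T r) :
    #(T.filter (c <+: ·)) < #(T.filter (r <+: ·)) := by
  obtain ⟨-, a, rfl⟩ := mem_children.1 hc
  refine card_lt_card ⟨monotone_filter_right _ fun _ _ hg => (List.prefix_append r [a]).trans hg,
    fun hsub => ?_⟩
  exact List.not_append_singleton_prefix r a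
    (mem_filter.1 (hsub (mem_filter.2 ⟨hr, List.prefix_refl r⟩))).2

structure ExpandSetFrom (T : Finset (List ℕ)) (r : List ℕ) (I : Finset (List ℕ)) : Prop where
  subset : I ⊆ T
  prefix_of_mem : ∀ h ∈ I, r <+: h
  children_nonempty : ∀ h ∈ I, (children T h).Nonempty
  mem_of_prefix : ∀ h ∈ I, ∀ h' : List ℕ, r <+: h' → h' <+: h → h' ≠ h → h' ∈ I

noncomputable def boundaryFrom (T : Finset (List ℕ)) (r : List ℕ) (I : Finset (List ℕ)) :
    Finset (List ℕ) :=
  T.filter (fun h => r <+: h ∧ h ∉ I ∧ ∀ h' : List ℕ, r <+: h' → h' <+: h → h' ≠ h → h' ∈ I)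

noncomputable def objValFrom (T : Finset (List ℕ)) (r : List ℕ) (I : Finset (List ℕ))
    (w : List ℕ → ℝ) (lam : ℝ) : ℝ :=
  (∑ h ∈ boundaryFrom T r I, w h) - lam * #I

theorem expandSetFrom_nil_iff : ExpandSetFrom T [] I ↔ ExpandSet T I :=
  ⟨fun ⟨h₁, _, h₃, h₄⟩ => ⟨h₁, h₃, fun h hh h' => h₄ h hh h' List.nil_prefix⟩,
    fun ⟨h₁, h₂, h₃⟩ => ⟨h₁, fun _ _ => List.nil_prefix, h₂, fun h hh h' _ => h₃ h hh h'⟩⟩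

theorem objValFrom_nil (w : List ℕ → ℝ) (lam : ℝ) :
    objValFrom T [] I w lam = objVal T I w lam := by
  simp [objValFrom, objVal, boundaryFrom, boundary]

theorem expandSetFrom_empty (T : Finset (List ℕ)) (r : List ℕ) : ExpandSetFrom T r ∅ :=
  ⟨empty_subset _, by simp, by simp, by simp⟩

theorem ExpandSetFrom.eq_empty_of_notMem (hI : ExpandSetFrom T r I) (hr : r ∉ I) : I = ∅ := by
  refine eq_empty_of_forall_notMem fun g hg => hr ?_
  rcases eq_or_ne r g with rfl | hrg
  · exact hg
  · exact hI.mem_of_prefix g hg r (List.prefix_refl r) (hI.prefix_of_mem g hg) hrg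

theorem boundaryFrom_empty (hr : r ∈ T) : boundaryFrom T r ∅ = {r} := by
  ext g
  simp only [boundaryFrom, mem_filter, mem_singleton, notMem_empty, not_false_iff, true_and]
  constructor
  · rintro ⟨-, hrg, hanc⟩
    by_contra hne
    exact hanc r (List.prefix_refl r) hrg (Ne.symm hne)
  · rintro rfl
    exact ⟨hr, List.prefix_refl g, fun h' h₁ h₂ hne => hne (h₂.eq_of_length_le h₁.length_le)⟩

theorem objValFrom_empty (hr : r ∈ T) (w : List ℕ → ℝ) (lam : ℝ) :
    objValFrom T r ∅ w lam = w r := by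
  simp [objValFrom, boundaryFrom_empty hr]

theorem pairwiseDisjoint_filter_prefix_children (s : Finset (List ℕ)) :
    (children T r : Set (List ℕ)).PairwiseDisjoint fun c => s.filter (c <+: ·) := by
  intro c hc c' hc' hne
  refine disjoint_left.2 fun g hg hg' => hne ?_
  exact eq_of_mem_children_of_prefix hc hc' (mem_filter.1 hg).2 (mem_filter.1 hg').2

theorem ExpandSetFrom.restrict (hI : ExpandSetFrom T r I) (hc : c ∈ children T r) :
    ExpandSetFrom T c (I.filter (c <+: ·)) where
  subset := (filter_subset _ _).trans hI.subset
  prefix_of_mem _ hg := (mem_filter.1 hg).2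
  children_nonempty g hg := hI.children_nonempty g (mem_filter.1 hg).1
  mem_of_prefix g hg h' hch' hh'g hne := mem_filter.2
    ⟨hI.mem_of_prefix g (mem_filter.1 hg).1 h' ((prefix_of_mem_children hc).trans hch') hh'g hne,
      hch'⟩

theorem filter_prefix_insert_biUnion {J : List ℕ → Finset (List ℕ)}
    (hJ : ∀ c ∈ children T r, ∀ g ∈ J c, c <+: g) (hc : c ∈ children T r) :
    (insert r ((children T r).biUnion J)).filter (c <+: ·) = J c := by
  ext g
  simp only [mem_filter, mem_insert, mem_biUnion]
  constructor
  · rintro ⟨rfl | ⟨c', hc', hgc'⟩, hcg⟩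
    · obtain ⟨-, a, rfl⟩ := mem_children.1 hc
      exact absurd hcg (List.not_append_singleton_prefix g a)
    · rwa [eq_of_mem_children_of_prefix hc hc' hcg (hJ c' hc' g hgc')]
  · exact fun hg => ⟨Or.inr ⟨c, hc, hg⟩, hJ c hc g hg⟩

theorem expandSetFrom_insert_biUnion (hr : r ∈ T) (hch : (children T r).Nonempty)
    {J : List ℕ → Finset (List ℕ)} (hJ : ∀ c ∈ children T r, ExpandSetFrom T c (J c)) :
    ExpandSetFrom T r (insert r ((children T r).biUnion J)) where
  subset := insert_subset hr (biUnion_subset.2 fun c hc => (hJ c hc).subset)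
  prefix_of_mem g hg := by
    rcases mem_insert.1 hg with rfl | hg
    · exact List.prefix_refl g
    · obtain ⟨c, hc, hgc⟩ := mem_biUnion.1 hg
      exact (prefix_of_mem_children hc).trans ((hJ c hc).prefix_of_mem g hgc)
  children_nonempty g hg := by
    rcases mem_insert.1 hg with rfl | hg
    · exact hch
    · obtain ⟨c, hc, hgc⟩ := mem_biUnion.1 hg
      exact (hJ c hc).children_nonempty g hgc
  mem_of_prefix g hg h' hrh' hh'g hne := by
    rcases mem_insert.1 hg with rfl | hg
    · exact absurd (hh'g.eq_of_length_le hrh'.length_le) hne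
    obtain ⟨c, hc, hgc⟩ := mem_biUnion.1 hg
    have hcg := (hJ c hc).prefix_of_mem g hgc
    obtain ⟨-, a, rfl⟩ := mem_children.1 hc
    rcases hrh'.eq_or_append_singleton_prefix hh'g hcg with rfl | hch'
    · exact mem_insert_self _ _
    · exact mem_insert_of_mem
        (mem_biUnion.2 ⟨_, hc, (hJ _ hc).mem_of_prefix g hgc h' hch' hh'g hne⟩)

section PrefixClosed

variable (hpc : ∀ h ∈ T, ∀ h' : List ℕ, h' <+: h → h' ∈ T)
include hpc

theorem exists_mem_children_prefix (hg : g ∈ T) (hrg : r <+: g) (hne : r ≠ g) :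
    ∃ c ∈ children T r, c <+: g := by
  obtain ⟨a, hag⟩ := hrg.exists_append_singleton_prefix hne
  exact ⟨r ++ [a], mem_children.2 ⟨hpc g hg _ hag, a, rfl⟩, hag⟩

theorem ExpandSetFrom.eq_insert_biUnion (hI : ExpandSetFrom T r I) (hr : r ∈ I) :
    I = insert r ((children T r).biUnion fun c => I.filter (c <+: ·)) := by
  ext g
  simp only [mem_insert, mem_biUnion, mem_filter]
  constructor
  · intro hg
    rcases eq_or_ne g r with rfl | hne
    · exact Or.inl rfl
    · obtain ⟨c, hc, hcg⟩ :=
        exists_mem_children_prefix hpc (hI.subset hg) (hI.prefix_of_mem g hg) hne.symm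
      exact Or.inr ⟨c, hc, hg, hcg⟩
  · rintro (rfl | ⟨-, -, hg, -⟩) <;> assumption

theorem ExpandSetFrom.card_eq (hI : ExpandSetFrom T r I) (hr : r ∈ I) :
    #I = ∑ c ∈ children T r, #(I.filter (c <+: ·)) + 1 := by
  conv_lhs => rw [hI.eq_insert_biUnion hpc hr]
  rw [card_insert_of_notMem, card_biUnion (pairwiseDisjoint_filter_prefix_children I)]
  simp only [mem_biUnion, mem_filter, not_exists, not_and]
  intro c hc _ hcr
  obtain ⟨-, a, rfl⟩ := mem_children.1 hc
  exact List.not_append_singleton_prefix r a hcr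

theorem ExpandSetFrom.boundaryFrom_eq_biUnion (hI : ExpandSetFrom T r I) (hr : r ∈ I) :
    boundaryFrom T r I =
      (children T r).biUnion fun c => boundaryFrom T c (I.filter (c <+: ·)) := by
  ext g
  simp only [boundaryFrom, mem_biUnion, mem_filter]
  constructor
  · rintro ⟨hgT, hrg, hgI, hanc⟩
    obtain ⟨c, hc, hcg⟩ := exists_mem_children_prefix hpc hgT hrg (by rintro rfl; exact hgI hr)
    exact ⟨c, hc, hgT, hcg, fun h => hgI h.1, fun h' hch' hh'g hne =>
      ⟨hanc h' ((prefix_of_mem_children hc).trans hch') hh'g hne, hch'⟩⟩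
  · rintro ⟨c, hc, hgT, hcg, hgI, hanc⟩
    refine ⟨hgT, (prefix_of_mem_children hc).trans hcg, fun h => hgI ⟨h, hcg⟩,
      fun h' hrh' hh'g hne => ?_⟩
    obtain ⟨-, a, rfl⟩ := mem_children.1 hc
    rcases hrh'.eq_or_append_singleton_prefix hh'g hcg with rfl | hch'
    · exact hr
    · exact (hanc h' hch' hh'g hne).1

theorem ExpandSetFrom.objValFrom_eq_sum_sub (hI : ExpandSetFrom T r I) (hr : r ∈ I)
    (w : List ℕ → ℝ) (lam : ℝ) :
    objValFrom T r I w lam =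
      ∑ c ∈ children T r, objValFrom T c (I.filter (c <+: ·)) w lam - lam := by
  have hdisj : (children T r : Set (List ℕ)).PairwiseDisjoint
      fun c => boundaryFrom T c (I.filter (c <+: ·)) :=
    (pairwiseDisjoint_filter_prefix_children T).mono fun _ =>
      monotone_filter_right _ fun _ _ h => h.1
  simp only [objValFrom, hI.boundaryFrom_eq_biUnion hpc hr, sum_biUnion hdisj, hI.card_eq hpc hr,
    sum_sub_distrib, ← mul_sum]
  push_cast
  ring

end PrefixClosed

end StoppingSubtree

section DynamicProgram

variable {T : Finset (List ℕ)} {w : List ℕ → ℝ} {lam : ℝ} {bestvalue : List ℕ → ℝ}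
  (hpc : ∀ h ∈ T, ∀ h' : List ℕ, h' <+: h → h' ∈ T)
  (hleaf : ∀ h ∈ T, children T h = ∅ → bestvalue h = w h)
  (hnode : ∀ h ∈ T, (children T h).Nonempty →
    bestvalue h = max ((∑ h' ∈ children T h, bestvalue h') - lam) (w h))
include hleaf hnode

theorem le_bestvalue {r : List ℕ} (hr : r ∈ T) : w r ≤ bestvalue r := by
  rcases (children T r).eq_empty_or_nonempty with hch | hch
  · exact (hleaf r hr hch).ge
  · exact hnode r hr hch ▸ le_max_right _ _

include hpc

theorem objValFrom_le_bestvalue {r : List ℕ} {I : Finset (List ℕ)} (hr : r ∈ T)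
    (hI : ExpandSetFrom T r I) :
    objValFrom T r I w lam ≤ bestvalue r := by
  by_cases hrI : r ∈ I
  · have ih (c) (hc : c ∈ children T r) :
        objValFrom T c (I.filter (c <+: ·)) w lam ≤ bestvalue c :=
      objValFrom_le_bestvalue ((filter_subset _ _) hc) (hI.restrict hc)
    calc objValFrom T r I w lam
        = ∑ c ∈ children T r, objValFrom T c (I.filter (c <+: ·)) w lam - lam :=
          hI.objValFrom_eq_sum_sub hpc hrI w lam
      _ ≤ ∑ c ∈ children T r, bestvalue c - lam := by gcongr with c hc; exact ih c hc
      _ ≤ bestvalue r := hnode r hr (hI.children_nonempty r hrI) ▸ le_max_left _ _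
  · rw [hI.eq_empty_of_notMem hrI, objValFrom_empty hr]
    exact le_bestvalue hleaf hnode hr
termination_by #(T.filter (r <+: ·))
decreasing_by exact card_filter_prefix_lt hr hc

theorem exists_objValFrom_eq_bestvalue {r : List ℕ} (hr : r ∈ T) :
    ∃ I, ExpandSetFrom T r I ∧ objValFrom T r I w lam = bestvalue r := by
  rcases (children T r).eq_empty_or_nonempty with hch | hch
  · exact ⟨∅, expandSetFrom_empty T r, by rw [objValFrom_empty hr, hleaf r hr hch]⟩
  rcases le_or_gt (∑ c ∈ children T r, bestvalue c - lam) (w r) with hstop | hexpand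
  · exact ⟨∅, expandSetFrom_empty T r,
      by rw [objValFrom_empty hr, hnode r hr hch, max_eq_right hstop]⟩
  have ih (c) (hc : c ∈ children T r) :
      ∃ J, ExpandSetFrom T c J ∧ objValFrom T c J w lam = bestvalue c :=
    exists_objValFrom_eq_bestvalue ((filter_subset _ _) hc)
  choose! J hJ hJval using ih
  have hI := expandSetFrom_insert_biUnion hr hch hJ
  refine ⟨_, hI, ?_⟩
  rw [hI.objValFrom_eq_sum_sub hpc (mem_insert_self _ _), hnode r hr hch, max_eq_left hexpand.le]
  congr 1
  refine sum_congr rfl fun c hc => ?_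
  rw [filter_prefix_insert_biUnion (fun c hc => (hJ c hc).prefix_of_mem) hc, hJval c hc]
termination_by #(T.filter (r <+: ·))
decreasing_by exact card_filter_prefix_lt hr hc

end DynamicProgram

theorem bestvalue_correct_general (T : Finset (List ℕ)) (hroot : [] ∈ T)
    (hpc : ∀ h ∈ T, ∀ h' : List ℕ, h' <+: h → h' ∈ T)
    (w : List ℕ → ℝ)
    (lam : ℝ)
    (bestvalue : List ℕ → ℝ)
    (hleaf : ∀ h ∈ T, children T h = ∅ → bestvalue h = w h)
    (hnode : ∀ h ∈ T, (children T h).Nonempty →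
      bestvalue h = max ((∑ h' ∈ children T h, bestvalue h') - lam) (w h)) :
    IsGreatest {x : ℝ | ∃ I : Finset (List ℕ), ExpandSet T I ∧ x = objVal T I w lam}
      (bestvalue []) := by
  obtain ⟨I, hI, hval⟩ := exists_objValFrom_eq_bestvalue hpc hleaf hnode hroot
  refine ⟨⟨I, expandSetFrom_nil_iff.1 hI, by rw [← objValFrom_nil, hval]⟩, ?_⟩
  rintro _ ⟨I, hI, rfl⟩
  rw [← objValFrom_nil]
  exact objValFrom_le_bestvalue hpc hleaf hnode hroot (expandSetFrom_nil_iff.2 hI)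

/-- Correctness of the dynamic program of Algorithm 1: `bestvalue(root)` equals
the maximum, over all stopping subtrees (expanded sets `I`), of the boundary
weight minus `λ·|I|`. -/
theorem bestvalue_correct (T : Finset (List ℕ)) (hroot : [] ∈ T)
    (hpc : ∀ h ∈ T, ∀ h' : List ℕ, h' <+: h → h' ∈ T)
    (w : List ℕ → ℝ) (hw : ∀ h ∈ T, w h ∈ Set.Icc (0 : ℝ) 1)
    (lam : ℝ) (hlam : 0 < lam)
    (bestvalue : List ℕ → ℝ)
    (hleaf : ∀ h ∈ T, children T h = ∅ → bestvalue h = w h)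
    (hnode : ∀ h ∈ T, (children T h).Nonempty →
      bestvalue h = max ((∑ h' ∈ children T h, bestvalue h') - lam) (w h)) :
    IsGreatest {x : ℝ | ∃ I : Finset (List ℕ), ExpandSet T I ∧ x = objVal T I w lam}
      (bestvalue []) :=
  bestvalue_correct_general T hroot hpc w lam bestvalue hleaf hnode
end

section
/- In a finite rooted tree with reachability probabilities π and depth ≤ L, suppose an optimal stopping subtree (as in the previous statement, with w(h) = u(h)·π(h) for values u(h) ∈ [0,1] and cost λ per expanded node) exists. Then there is an optimal stopping subtree in which every expanded node h satisfies π(h) ≥ λ. -/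
/-!
Every expanded node `h` of an optimal stopping subtree already satisfies `λ ≤ π(h)`. Otherwise,
stop at `h` instead: `h` joins the boundary, the boundary nodes below `h` are lost, and all
expanded nodes below `h`, at least `h` itself, are no longer paid for. The lost boundary nodes
form an antichain of descendants of `h`, so their weights `u(b)·π(b) ≤ π(b)` add up to at most
`π(h)`, and the objective rises by at least `λ - π(h) > 0`, contradicting optimality.
-/

open Finset
open scoped Classical

lemma take_succ_mem_children {T : Finset (List ℕ)} {π : List ℕ → ℝ} (hT : TreeProb T π)
    {h b : List ℕ} (hb : b ∈ T) (hpre : h <+: b) (hne : h ≠ b) :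
    b.take (h.length + 1) ∈ children T h := by
  obtain ⟨_ | ⟨a, t⟩, rfl⟩ := hpre
  · simp at hne
  · have htake : (h ++ a :: t).take (h.length + 1) = h ++ [a] := by simp [List.take_append]
    rw [htake]
    exact mem_filter.mpr ⟨hT.prefix_closed _ hb _ ⟨t, by simp⟩, a, rfl⟩

lemma sum_le_of_isAntichain_of_length_le {T : Finset (List ℕ)} {π : List ℕ → ℝ}
    (hT : TreeProb T π) (n : ℕ) {h : List ℕ} (hh : h ∈ T) {S : Finset (List ℕ)}
    (hST : S ⊆ T) (hdesc : ∀ b ∈ S, h <+: b)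
    (hanti : IsAntichain (· <+: ·) (S : Set (List ℕ)))
    (hlen : ∀ b ∈ S, b.length ≤ h.length + n) :
    ∑ b ∈ S, π b ≤ π h := by
  induction n generalizing h S with
  | zero =>
    have hsub : S ⊆ {h} := fun b hb => mem_singleton.mpr
      ((hdesc b hb).eq_of_length (le_antisymm (hdesc b hb).length_le (hlen b hb))).symm
    calc ∑ b ∈ S, π b ≤ ∑ b ∈ {h}, π b := sum_le_sum_of_subset_of_nonneg hsub
          fun b hb _ => hT.nonneg b (mem_singleton.mp hb ▸ hh)
      _ = π h := sum_singleton π h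
  | succ n ih =>
    by_cases hhS : h ∈ S
    · rw [eq_singleton_iff_unique_mem.mpr
        ⟨hhS, fun b hb => (hanti.eq hhS hb (hdesc b hb)).symm⟩, sum_singleton]
    obtain rfl | ⟨b₀, hb₀⟩ := S.eq_empty_or_nonempty
    · simpa using hT.nonneg h hh
    have hchild : ∀ b ∈ S, b.take (h.length + 1) ∈ children T h := fun b hb =>
      take_succ_mem_children hT (hST hb) (hdesc b hb) (by rintro rfl; exact hhS hb)
    -- group `S` by the child of `h` through which each node passes
    rw [← sum_fiberwise_of_maps_to hchild, hT.internal_sum h hh ⟨_, hchild b₀ hb₀⟩]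
    refine sum_le_sum fun c hc => ?_
    obtain ⟨hcT, a, rfl⟩ := mem_filter.mp hc
    refine ih hcT ((filter_subset _ _).trans hST) (fun b hb => ?_)
      (hanti.subset (coe_subset.mpr (filter_subset _ _))) (fun b hb => ?_)
    · exact (mem_filter.mp hb).2 ▸ List.take_prefix _ _
    · have := hlen b (mem_filter.mp hb).1
      simp only [List.length_append, List.length_singleton]
      omega

theorem sum_le_of_isAntichain {T : Finset (List ℕ)} {π : List ℕ → ℝ} (hT : TreeProb T π)
    {h : List ℕ} (hh : h ∈ T) {S : Finset (List ℕ)} (hST : S ⊆ T)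
    (hdesc : ∀ b ∈ S, h <+: b)
    (hanti : IsAntichain (· <+: ·) (S : Set (List ℕ))) :
    ∑ b ∈ S, π b ≤ π h :=
  sum_le_of_isAntichain_of_length_le hT (T.sup List.length) hh hST hdesc hanti fun _ hb =>
    (le_sup (hST hb)).trans (Nat.le_add_left _ _)

lemma isAntichain_boundary (T I : Finset (List ℕ)) :
    IsAntichain (· <+: ·) (boundary T I : Set (List ℕ)) :=
  fun b hb _ hb' hne hpre => (mem_filter.mp hb).2.1 ((mem_filter.mp hb').2.2 b hpre hne)

noncomputable def prune (I : Finset (List ℕ)) (h : List ℕ) : Finset (List ℕ) :=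
  I.filter fun b => ¬ h <+: b

@[simp]
lemma mem_prune {I : Finset (List ℕ)} {h b : List ℕ} :
    b ∈ prune I h ↔ b ∈ I ∧ ¬ h <+: b :=
  mem_filter

lemma card_prune_lt {I : Finset (List ℕ)} {h : List ℕ} (hh : h ∈ I) :
    (prune I h).card < I.card :=
  card_lt_card (filter_ssubset.mpr ⟨h, hh, not_not.mpr (List.prefix_refl h)⟩)

lemma ExpandSet.prune {T I : Finset (List ℕ)} (hI : ExpandSet T I) (h : List ℕ) :
    ExpandSet T (prune I h) := by
  obtain ⟨hIT, hchildren, hclosed⟩ := hI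
  refine ⟨(filter_subset _ _).trans hIT, fun b hb => hchildren b (mem_prune.mp hb).1, ?_⟩
  intro b hb a hab hne
  obtain ⟨hbI, hhb⟩ := mem_prune.mp hb
  exact mem_prune.mpr ⟨hclosed b hbI a hab hne, fun hha => hhb (hha.trans hab)⟩

lemma boundary_prune {T I : Finset (List ℕ)} (hI : ExpandSet T I) {h : List ℕ} (hh : h ∈ I) :
    boundary T (prune I h) = insert h (prune (boundary T I) h) := by
  ext b
  simp only [boundary, mem_insert, mem_prune, mem_filter, not_and, not_not]
  constructor
  · rintro ⟨hbT, hbI, hanc⟩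
    by_cases hhb : h <+: b
    · left
      by_contra hne
      exact (hanc h hhb (Ne.symm hne)).2 (List.prefix_refl h)
    · right
      exact ⟨⟨hbT, fun hb => hhb (hbI hb), fun a hab hne => (hanc a hab hne).1⟩, hhb⟩
  · rintro (rfl | ⟨⟨hbT, hbI, hanc⟩, hhb⟩)
    · refine ⟨hI.1 hh, fun _ => List.prefix_refl b, fun a hab hne =>
        ⟨hI.2.2 b hh a hab hne, ?_⟩⟩
      exact fun hba => hne (hab.eq_of_length (le_antisymm hab.length_le hba.length_le))
    · exact ⟨hbT, fun hb => (hbI hb).elim, fun a hab hne =>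
        ⟨hanc a hab hne, fun hha => hhb (hha.trans hab)⟩⟩

lemma objVal_lt_objVal_prune {T : Finset (List ℕ)} {π u : List ℕ → ℝ} (hT : TreeProb T π)
    (hu : ∀ h ∈ T, u h ∈ Set.Icc (0 : ℝ) 1) {I : Finset (List ℕ)} (hI : ExpandSet T I)
    {h : List ℕ} (hh : h ∈ I) {lam : ℝ} (hlt : π h < lam) :
    objVal T I (fun h => u h * π h) lam < objVal T (prune I h) (fun h => u h * π h) lam := by
  have hhT : h ∈ T := hI.1 hh
  have hbelow : (boundary T I).filter (h <+: ·) ⊆ T :=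
    (filter_subset _ _).trans (filter_subset _ _)
  have hlost : ∑ b ∈ (boundary T I).filter (h <+: ·), u b * π b ≤ π h := calc
    _ ≤ ∑ b ∈ (boundary T I).filter (h <+: ·), π b := sum_le_sum fun b hb =>
          mul_le_of_le_one_left (hT.nonneg b (hbelow hb)) (hu b (hbelow hb)).2
    _ ≤ π h := sum_le_of_isAntichain hT hhT hbelow (fun b hb => (mem_filter.mp hb).2)
          ((isAntichain_boundary T I).subset (coe_subset.mpr (filter_subset _ _)))
  have hgain : 0 ≤ u h * π h := mul_nonneg (hu h hhT).1 (hT.nonneg h hhT)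
  have hcost : lam * ((prune I h).card + 1) ≤ lam * I.card :=
    mul_le_mul_of_nonneg_left (by exact_mod_cast card_prune_lt hh)
      ((hT.nonneg h hhT).trans hlt.le)
  have hh_notMem : h ∉ prune (boundary T I) h := fun hmem =>
    (mem_prune.mp hmem).2 (List.prefix_refl h)
  rw [objVal, objVal, boundary_prune hI hh, sum_insert hh_notMem, prune,
    ← sum_filter_add_sum_filter_not (boundary T I) (h <+: ·)]
  linarith

theorem optimal_expand_high_prob_general (T : Finset (List ℕ)) (π : List ℕ → ℝ)
    (hT : TreeProb T π) (u : List ℕ → ℝ) (hu : ∀ h ∈ T, u h ∈ Set.Icc (0 : ℝ) 1)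
    (lam : ℝ)
    (I₀ : Finset (List ℕ)) (hI₀ : ExpandSet T I₀)
    (hopt : ∀ I : Finset (List ℕ), ExpandSet T I →
      objVal T I (fun h => u h * π h) lam ≤ objVal T I₀ (fun h => u h * π h) lam) :
    ∃ I : Finset (List ℕ), ExpandSet T I ∧
      (∀ I' : Finset (List ℕ), ExpandSet T I' →
        objVal T I' (fun h => u h * π h) lam ≤ objVal T I (fun h => u h * π h) lam) ∧
      ∀ h ∈ I, lam ≤ π h := by
  refine ⟨I₀, hI₀, hopt, fun h hh => ?_⟩
  by_contra! hlt
  exact (hopt _ (hI₀.prune h)).not_gt (objVal_lt_objVal_prune hT hu hI₀ hh hlt)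

/-- If an optimal stopping subtree exists (weights `w(h) = u(h)·π(h)` with
values `u(h) ∈ [0,1]` and cost `λ` per expanded node), then there is an optimal
stopping subtree in which every expanded node `h` satisfies `π(h) ≥ λ`. -/
theorem optimal_expand_high_prob (T : Finset (List ℕ)) (π : List ℕ → ℝ)
    (hT : TreeProb T π) (u : List ℕ → ℝ) (hu : ∀ h ∈ T, u h ∈ Set.Icc (0 : ℝ) 1)
    (lam : ℝ) (hlam : 0 < lam)
    (I₀ : Finset (List ℕ)) (hI₀ : ExpandSet T I₀)
    (hopt : ∀ I : Finset (List ℕ), ExpandSet T I →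
      objVal T I (fun h => u h * π h) lam ≤ objVal T I₀ (fun h => u h * π h) lam) :
    ∃ I : Finset (List ℕ), ExpandSet T I ∧
      (∀ I' : Finset (List ℕ), ExpandSet T I' →
        objVal T I' (fun h => u h * π h) lam ≤ objVal T I (fun h => u h * π h) lam) ∧
      ∀ h ∈ I, lam ≤ π h :=
  optimal_expand_high_prob_general T π hT u hu lam I₀ hI₀ hopt
end
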